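/- If the set of 2-chains of length 2 for the syntactic morphism α of L is such that whenever (s,s') and (s',s) are both 2-chains we have s = s' and moreover all chains (s₁,…,sₙ) with unbounded n have bounded alternation, then there exists k such that ≈ᵏ-equivalent words have equal image under α; contrapositively: if for every k there exist words w ≈ᵏ w' with α(w) ≠ α(w'), then the set of 2-chains for α contains (s,s')^j for all j ≥ 1, for some pair s ≠ s', hence has unbounded alternation. -/
import Mathlib


/-- First-order formulas over words on alphabet `A`, with de Bruijn indexed
variables, unary letter predicates `P_a x` and the order predicate `x < y`. -/
inductive FO (A : Type) : Type
  | letter : A → ℕ → FO A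
  | lt : ℕ → ℕ → FO A
  | not : FO A → FO A
  | and : FO A → FO A → FO A
  | or : FO A → FO A → FO A
  | ex : FO A → FO A
  | all : FO A → FO A

namespace FO

variable {A : Type}

/-- Satisfaction of a formula in a word `w` under an assignment `v` of
variables to positions; quantifiers range over the positions of `w`,
`letter a x` holds when position `v x` carries the letter `a`. -/
def Sat (w : List A) : (ℕ → ℕ) → FO A → Prop
  | v, letter a x => w[(v x)]? = some a
  | v, lt x y => v x < v y ∧ v y < w.length
  | v, not φ => ¬ Sat w v φ
  | v, and φ ψ => Sat w v φ ∧ Sat w v ψ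
  | v, or φ ψ => Sat w v φ ∨ Sat w v ψ
  | v, ex φ => ∃ p < w.length, Sat w (fun n => Nat.casesOn n p v) φ
  | v, all φ => ∀ p < w.length, Sat w (fun n => Nat.casesOn n p v) φ

/-- Quantifier rank of a formula. -/
def qr : FO A → ℕ
  | letter _ _ => 0
  | lt _ _ => 0
  | not φ => qr φ
  | and φ ψ => max (qr φ) (qr ψ)
  | or φ ψ => max (qr φ) (qr ψ)
  | ex φ => qr φ + 1
  | all φ => qr φ + 1

/-- A bound on free (de Bruijn) variables: all free variables are `< fvBound φ`. -/
def fvBound : FO A → ℕ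
  | letter _ x => x + 1
  | lt x y => max x y + 1
  | not φ => fvBound φ
  | and φ ψ => max (fvBound φ) (fvBound ψ)
  | or φ ψ => max (fvBound φ) (fvBound ψ)
  | ex φ => fvBound φ - 1
  | all φ => fvBound φ - 1

/-- A sentence is a formula with no free variables. -/
def IsSentence (φ : FO A) : Prop := fvBound φ = 0

/-- Quantifier-free formulas. -/
def QF : FO A → Prop
  | letter _ _ => True
  | lt _ _ => True
  | not φ => QF φ
  | and φ ψ => QF φ ∧ QF ψ
  | or φ ψ => QF φ ∧ QF ψ
  | ex _ => False
  | all _ => False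

mutual
  /-- `Σᵢ` formulas: quantifier-free formulas, positive boolean combinations,
  existential quantification over `Σᵢ` (for `i ≥ 1`), and every `Πᵢ` formula
  is `Σ_{i+1}`; this captures formulas whose prenex normal form has at most
  `i` quantifier blocks starting with an existential block. -/
  inductive IsSigma : ℕ → FO A → Prop
    | of_qf {i : ℕ} {φ : FO A} : QF φ → IsSigma i φ
    | of_pi {i : ℕ} {φ : FO A} : IsPi i φ → IsSigma (i + 1) φ
    | and {i : ℕ} {φ ψ : FO A} : IsSigma i φ → IsSigma i ψ → IsSigma i (FO.and φ ψ)
    | or {i : ℕ} {φ ψ : FO A} : IsSigma i φ → IsSigma i ψ → IsSigma i (FO.or φ ψ)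
    | ex {i : ℕ} {φ : FO A} : IsSigma (i + 1) φ → IsSigma (i + 1) (FO.ex φ)
  /-- `Πᵢ` formulas, dual to `Σᵢ`. -/
  inductive IsPi : ℕ → FO A → Prop
    | of_qf {i : ℕ} {φ : FO A} : QF φ → IsPi i φ
    | of_sigma {i : ℕ} {φ : FO A} : IsSigma i φ → IsPi (i + 1) φ
    | and {i : ℕ} {φ ψ : FO A} : IsPi i φ → IsPi i ψ → IsPi i (FO.and φ ψ)
    | or {i : ℕ} {φ ψ : FO A} : IsPi i φ → IsPi i ψ → IsPi i (FO.or φ ψ)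
    | all {i : ℕ} {φ : FO A} : IsPi (i + 1) φ → IsPi (i + 1) (FO.all φ)
end

/-- The preorder `w ≤ᵏᵢ w'`: every `Σᵢ` sentence of quantifier rank at most
`k` satisfied by `w` is satisfied by `w'`. -/
def sle (i k : ℕ) (w w' : List A) : Prop :=
  ∀ φ : FO A, IsSigma i φ → qr φ ≤ k → IsSentence φ →
    Sat w (fun _ => 0) φ → Sat w' (fun _ => 0) φ

end FO

/-- `(s₁,…,sₙ)` is a `2`-chain of length `n` for `α` if for every `k` there
exist words `w₁ ≤ᵏ₂ ⋯ ≤ᵏ₂ wₙ` (in the `Σ₂` rank-`k` preorder) with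
`α wⱼ = sⱼ`. -/
def IsChainTup {A M : Type} (α : List A → M) {n : ℕ} (s : Fin n → M) : Prop :=
  ∀ k : ℕ, ∃ w : Fin n → List A,
    (∀ j : Fin n, α (w j) = s j) ∧
    ∀ (j : ℕ) (h : j + 1 < n),
      FO.sle 2 k (w ⟨j, Nat.lt_of_succ_lt h⟩) (w ⟨j + 1, h⟩)

/-- `u ≈ᵏ v`: `u ≤ᵏ₂ v` and `v ≤ᵏ₂ u` (same `BΣ₂` sentences of rank `k`). -/
def bceq {A : Type} (k : ℕ) (u v : List A) : Prop :=
  FO.sle 2 k u v ∧ FO.sle 2 k v u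

/-- If for every `k` there exist words `w ≈ᵏ w'` with `α w ≠ α w'`, then there
is a pair `s ≠ s'` such that for every `j ≥ 1` the alternating tuple
`(s, s')^j` of length `2j` is a `2`-chain for `α`; hence the set of `2`-chains
for `α` has unbounded alternation. -/
theorem unbounded_alternation_of_not_separated {A : Type} [Fintype A]
    {M : Type} [Monoid M] [Finite M] (α : List A → M)
    (hα : ∀ u v : List A, α (u ++ v) = α u * α v)
    (h : ∀ k : ℕ, ∃ w w' : List A, bceq k w w' ∧ α w ≠ α w') :
    ∃ s s' : M, s ≠ s' ∧ ∀ j : ℕ, 1 ≤ j →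
      IsChainTup α
        (fun x : Fin (2 * j) => if (x : ℕ) % 2 = 0 then s else s') := by
  choose w w' hb hne using h
  obtain ⟨p, hp⟩ := Finite.exists_infinite_fiber (fun k => (α (w k), α (w' k)))
  have hp' : {k : ℕ | (α (w k), α (w' k)) = p}.Infinite := by
    rw [← Set.infinite_coe_iff]
    exact hp
  refine ⟨p.1, p.2, ?_, ?_⟩
  · obtain ⟨k, hk⟩ := hp'.nonempty
    simp only [Set.mem_setOf_eq] at hk
    intro hss
    apply hne k
    have h1 : p.1 = α (w k) := by rw [← hk]
    have h2 : p.2 = α (w' k) := by rw [← hk]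
    rw [← h1, ← h2, hss]
  · intro j hj k
    obtain ⟨k', hk', hkk'⟩ := hp'.exists_gt k
    simp only [Set.mem_setOf_eq] at hk'
    have mono : ∀ u v : List A, FO.sle 2 k' u v → FO.sle 2 k u v := by
      intro u v hs φ h1 h2 h3
      exact hs φ h1 (h2.trans hkk'.le) h3
    refine ⟨fun x : Fin (2 * j) => if (x : ℕ) % 2 = 0 then w k' else w' k', ?_, ?_⟩
    · intro x
      by_cases hx : (x : ℕ) % 2 = 0 <;> simp [hx, ← hk']
    · intro i hi
      by_cases hx : i % 2 = 0
      · have hx1 : ¬ (i + 1) % 2 = 0 := by omega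
        simp only [hx, hx1, if_true, if_false]
        exact mono _ _ (hb k').1
      · have hx1 : (i + 1) % 2 = 0 := by omega
        simp only [hx, hx1, if_true, if_false]
        exact mono _ _ (hb k').2
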